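/- Let T be a ranked Safra tree with n nodes, and list its nodes in depth-first post-order as v₁, …, vₙ. Then vₙ is the root of T, and for every i < n the parent of vᵢ is v_j where j = min{k | i < k ≤ n and rk(v_k) < rk(vᵢ)}; moreover, if vᵢ is the left sibling of v_{j}, then i < j. -/

import Mathlib

universe u

/-- A finite ordered rooted tree, each node carrying a label (a subset of `Q`) and a
rank (a natural number); the children lists give the sibling order. -/
inductive OTree (Q : Type u) : Type u where
  | node : Set Q → ℕ → List (OTree Q) → OTree Q

namespace OTree

variable {Q : Type u}

/-- Label of the root node. -/
def rootLabel : OTree Q → Set Q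
  | node S _ _ => S

/-- Rank of the root node. -/
def rootRank : OTree Q → ℕ
  | node _ r _ => r

mutual
  /-- Depth-first post-order listing of the (label, rank) pairs of all nodes. -/
  def postorder : OTree Q → List (Set Q × ℕ)
    | .node S r cs => postorderL cs ++ [(S, r)]
  def postorderL : List (OTree Q) → List (Set Q × ℕ)
    | [] => []
    | t :: ts => postorder t ++ postorderL ts
end

/-- The labels of all nodes, in post-order. -/
def labels (t : OTree Q) : List (Set Q) := (postorder t).map Prod.fst

/-- The ranks of all nodes, in post-order. -/
def ranks (t : OTree Q) : List ℕ := (postorder t).map Prod.snd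

/-- Number of nodes. -/
def size (t : OTree Q) : ℕ := (postorder t).length

mutual
  /-- Each parent has a smaller rank than each of its children, and the ranks of the
  children of any node strictly increase from left to right. -/
  def RanksOK : OTree Q → Prop
    | .node _ r cs =>
        (cs.map rootRank).Pairwise (· < ·) ∧ (∀ c ∈ cs, r < rootRank c) ∧ RanksOKL cs
  def RanksOKL : List (OTree Q) → Prop
    | [] => True
    | t :: ts => RanksOK t ∧ RanksOKL ts
end

/-- A valid ranked Safra tree: nonempty pairwise disjoint labels, the ranks form a
bijection onto `{1,…,n}`, a parent's rank is smaller than its children's ranks and the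
sibling order agrees with the rank order. -/
def IsRankedSafraTree (t : OTree Q) : Prop :=
  (∀ S ∈ labels t, S.Nonempty) ∧ (labels t).Pairwise Disjoint ∧
  (ranks t).Perm (List.range' 1 (size t)) ∧ RanksOK t

end OTree

namespace OTree

variable {Q : Type u}

mutual
  /-- The (child rank, parent rank) pairs of all edges of the tree.  Since the ranks of
  a ranked Safra tree are a bijection onto `{1,…,n}`, nodes are faithfully identified
  by their ranks. -/
  def edges : OTree Q → List (ℕ × ℕ)
    | .node _ r cs => cs.map (fun c => (rootRank c, r)) ++ edgesL cs
  def edgesL : List (OTree Q) → List (ℕ × ℕ)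
    | [] => []
    | t :: ts => edges t ++ edgesL ts
end

/-- Adjacent pairs of a list. -/
def adjPairs (l : List ℕ) : List (ℕ × ℕ) := l.zip l.tail

mutual
  /-- The (left sibling rank, right sibling rank) pairs of all pairs of adjacent
  siblings of the tree. -/
  def sibEdges : OTree Q → List (ℕ × ℕ)
    | .node _ _ cs => adjPairs (cs.map rootRank) ++ sibEdgesL cs
  def sibEdgesL : List (OTree Q) → List (ℕ × ℕ)
    | [] => []
    | t :: ts => sibEdges t ++ sibEdgesL ts
end

end OTree

/-!
Number the nodes by their post-order positions. The nodes visited after a node `v` and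
before its parent are exactly the subtrees of the right siblings of `v`; since siblings
increase in rank from left to right and every node has the smallest rank of its subtree,
all of them rank above `v`, while the parent ranks below it. So the parent is the next
position holding a smaller rank. Adjacent siblings appear in the order of their subtrees,
and the post-order is injective on ranks, which gives the sibling claim.
-/

namespace List

variable {α : Type*}

def NextSmaller [Preorder α] (l : List α) (p : ℕ) (a b : α) : Prop :=
  ∃ A B C, l = A ++ a :: (B ++ b :: C) ∧ A.length = p ∧ b < a ∧ ∀ x ∈ B, a < x

namespace NextSmaller

variable [Preorder α] {l : List α} {p : ℕ} {a b : α}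

theorem append_right (h : NextSmaller l p a b) (l' : List α) :
    NextSmaller (l ++ l') p a b := by
  obtain ⟨A, B, C, rfl, hA, hba, hB⟩ := h
  exact ⟨A, B, C ++ l', by simp, hA, hba, hB⟩

theorem append_left (h : NextSmaller l p a b) (l' : List α) :
    NextSmaller (l' ++ l) (l'.length + p) a b := by
  obtain ⟨A, B, C, rfl, rfl, hba, hB⟩ := h
  exact ⟨l' ++ A, B, C, by simp, by simp, hba, hB⟩

theorem getD_eq (h : NextSmaller l p a b) (d : α) : l.getD p d = a := by
  obtain ⟨A, B, C, rfl, rfl, -⟩ := h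
  simp [getD_eq_getElem?_getD]

theorem getD_sInf_sub_one (h : NextSmaller l p a b) (d : α) :
    l.getD (sInf {k | p + 1 < k ∧ k ≤ l.length ∧ l.getD (k - 1) d < a} - 1) d = b := by
  obtain ⟨A, B, C, rfl, rfl, hba, hB⟩ := h
  set l := A ++ a :: (B ++ b :: C)
  have hb : l.getD (A.length + (B.length + 1)) d = b := by simp [l, getD_eq_getElem?_getD]
  have hbetween : ∀ m < B.length, a < l.getD (A.length + (m + 1)) d := fun m hm =>
    hB _ (by simp [l, getD_eq_getElem?_getD, getElem?_append_right, getElem?_append_left hm, hm])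
  have hleast : IsLeast {k | A.length + 1 < k ∧ k ≤ l.length ∧ l.getD (k - 1) d < a}
      (A.length + (B.length + 1) + 1) := by
    refine ⟨⟨by omega, by simp [l], by rw [Nat.add_sub_cancel, hb]; exact hba⟩, ?_⟩
    rintro k ⟨hk₁, -, hk⟩
    by_contra! hlt
    have := hbetween (k - 1 - A.length - 1) (by omega)
    rw [show A.length + (k - 1 - A.length - 1 + 1) = k - 1 by omega] at this
    exact lt_asymm hk this
  rw [hleast.csInf_eq, Nat.add_sub_cancel, hb]

end NextSmaller

theorem pair_sublist_of_mem_zip_tail : ∀ {l : List α} {a b : α},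
    (a, b) ∈ l.zip l.tail → [a, b] <+ l
  | [], _, _, h | [_], _, _, h => by simp at h
  | x :: y :: l, a, b, h => by
    rcases mem_cons.1 h with h | h
    · obtain ⟨rfl, rfl⟩ := Prod.mk.inj h
      simp
    · exact (pair_sublist_of_mem_zip_tail h).cons x

theorem idxOf_lt_idxOf_of_pair_sublist [BEq α] [LawfulBEq α] {l : List α} {a b : α}
    (hl : l.Nodup) (h : [a, b] <+ l) : l.idxOf a < l.idxOf b := by
  obtain ⟨l₁, l₂, rfl, ha, hb⟩ := append_sublist_iff.1 (show [a] ++ [b] <+ l from h)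
  rw [singleton_sublist] at ha hb
  have hb₁ : b ∉ l₁ := fun hb₁ => disjoint_of_nodup_append hl hb₁ hb
  rw [idxOf_append_of_mem ha, idxOf_append_of_notMem hb₁]
  have := idxOf_lt_length_of_mem ha
  omega

end List

namespace OTree

open scoped List

variable {Q : Type u}

def ranksL (cs : List (OTree Q)) : List ℕ := (postorderL cs).map Prod.snd

theorem ranks_node (S : Set Q) (r : ℕ) (cs : List (OTree Q)) :
    ranks (node S r cs) = ranksL cs ++ [r] := by
  simp [ranks, postorder, ranksL]

theorem ranksL_nil : ranksL ([] : List (OTree Q)) = [] := by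
  simp [ranksL, postorderL]

theorem ranksL_cons (t : OTree Q) (ts : List (OTree Q)) :
    ranksL (t :: ts) = ranks t ++ ranksL ts := by
  simp [ranksL, postorderL, ranks]

theorem size_eq_length_ranks (t : OTree Q) : size t = (ranks t).length := by
  simp [size, ranks]

theorem exists_ranks_eq_append_rootRank : ∀ t : OTree Q, ∃ l, ranks t = l ++ [rootRank t]
  | node _ r cs => ⟨ranksL cs, ranks_node _ r cs⟩

mutual
theorem rootRank_le_of_mem_ranks : ∀ {t : OTree Q}, RanksOK t →
    ∀ x ∈ ranks t, rootRank t ≤ x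
  | node _ r cs, hok, x, hx => by
    rw [RanksOK] at hok
    rw [ranks_node, List.mem_append, List.mem_singleton] at hx
    rcases hx with hx | rfl
    · exact (lt_of_mem_ranksL hok.2.2 hok.2.1 x hx).le
    · exact le_rfl

theorem lt_of_mem_ranksL : ∀ {cs : List (OTree Q)} {r : ℕ}, RanksOKL cs →
    (∀ c ∈ cs, r < rootRank c) → ∀ x ∈ ranksL cs, r < x
  | [], _, _, _, x, hx => by simp [ranksL_nil] at hx
  | c :: cs, r, hok, hr, x, hx => by
    rw [RanksOKL] at hok
    rw [ranksL_cons, List.mem_append] at hx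
    rcases hx with hx | hx
    · exact (hr c List.mem_cons_self).trans_le (rootRank_le_of_mem_ranks hok.1 x hx)
    · exact lt_of_mem_ranksL hok.2 (fun d hd => hr d (List.mem_cons_of_mem c hd)) x hx
end

mutual
theorem exists_nextSmaller_mem_edges : ∀ {t : OTree Q}, RanksOK t → ∀ {p : ℕ},
    p + 1 < (ranks t).length → ∃ a b, (ranks t).NextSmaller p a b ∧ (a, b) ∈ edges t
  | node _ r cs, hok, p, hp => by
    rw [RanksOK] at hok
    rw [ranks_node, List.length_append, List.length_singleton, Nat.add_lt_add_iff_right] at hp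
    rw [ranks_node, edges]
    rcases exists_nextSmaller_mem_edgesL_or_root hok.2.2 hok.1 hp with
      ⟨a, b, hab, hedge⟩ | ⟨c, hc, A, B, hl, hA, hB⟩
    · exact ⟨a, b, hab.append_right _, List.mem_append_right _ hedge⟩
    · exact ⟨rootRank c, r, ⟨A, B, [], by simp [hl], hA, hok.2.1 c hc, hB⟩,
        List.mem_append_left _ (List.mem_map_of_mem (f := fun c => (rootRank c, r)) hc)⟩

theorem exists_nextSmaller_mem_edgesL_or_root : ∀ {cs : List (OTree Q)}, RanksOKL cs →
    (cs.map rootRank).Pairwise (· < ·) → ∀ {p : ℕ}, p < (ranksL cs).length →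
    (∃ a b, (ranksL cs).NextSmaller p a b ∧ (a, b) ∈ edgesL cs) ∨
      ∃ c ∈ cs, ∃ A B, ranksL cs = A ++ rootRank c :: B ∧ A.length = p ∧
        ∀ x ∈ B, rootRank c < x
  | [], _, _, _, hp => by simp [ranksL_nil] at hp
  | c :: cs, hok, hpw, p, hp => by
    rw [RanksOKL] at hok
    rw [List.map_cons, List.pairwise_cons] at hpw
    rw [ranksL_cons] at hp ⊢
    rw [edgesL]
    rcases lt_trichotomy (p + 1) (ranks c).length with hlt | heq | hgt
    · obtain ⟨a, b, hab, hedge⟩ := exists_nextSmaller_mem_edges hok.1 hlt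
      exact .inl ⟨a, b, hab.append_right _, List.mem_append_left _ hedge⟩
    · obtain ⟨A, hA⟩ := exists_ranks_eq_append_rootRank c
      rw [hA, List.length_append, List.length_singleton] at heq
      refine .inr ⟨c, List.mem_cons_self, A, ranksL cs, by simp [hA], by omega, ?_⟩
      exact lt_of_mem_ranksL hok.2 fun d hd => hpw.1 _ (List.mem_map_of_mem hd)
    · obtain ⟨q, rfl⟩ : ∃ q, p = (ranks c).length + q := ⟨p - (ranks c).length, by omega⟩
      rw [List.length_append, Nat.add_lt_add_iff_left] at hp
      rcases exists_nextSmaller_mem_edgesL_or_root hok.2 hpw.2 hp with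
        ⟨a, b, hab, hedge⟩ | ⟨d, hd, A, B, hl, hA, hB⟩
      · exact .inl ⟨a, b, hab.append_left _, List.mem_append_right _ hedge⟩
      · exact .inr ⟨d, List.mem_cons_of_mem c hd, ranks c ++ A, B, by simp [hl],
          by simp [hA], hB⟩
end

theorem map_rootRank_sublist_ranksL : ∀ cs : List (OTree Q), cs.map rootRank <+ ranksL cs
  | [] => by simp [ranksL_nil]
  | c :: cs => by
    obtain ⟨A, hA⟩ := exists_ranks_eq_append_rootRank c
    rw [List.map_cons, ranksL_cons, hA, ← List.singleton_append]
    exact (List.sublist_append_right A _).append (map_rootRank_sublist_ranksL cs)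

mutual
theorem pair_sublist_ranks_of_mem_sibEdges : ∀ {t : OTree Q} {a b : ℕ},
    (a, b) ∈ sibEdges t → [a, b] <+ ranks t
  | node _ r cs, a, b, h => by
    rw [sibEdges, adjPairs, List.mem_append] at h
    rw [ranks_node]
    refine List.Sublist.trans ?_ (List.sublist_append_left _ _)
    rcases h with h | h
    · exact (List.pair_sublist_of_mem_zip_tail h).trans (map_rootRank_sublist_ranksL cs)
    · exact pair_sublist_ranksL_of_mem_sibEdgesL h

theorem pair_sublist_ranksL_of_mem_sibEdgesL : ∀ {cs : List (OTree Q)} {a b : ℕ},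
    (a, b) ∈ sibEdgesL cs → [a, b] <+ ranksL cs
  | [], _, _, h => by simp [sibEdgesL] at h
  | c :: cs, a, b, h => by
    rw [sibEdgesL, List.mem_append] at h
    rw [ranksL_cons]
    rcases h with h | h
    · exact (pair_sublist_ranks_of_mem_sibEdges h).trans (List.sublist_append_left _ _)
    · exact (pair_sublist_ranksL_of_mem_sibEdgesL h).trans (List.sublist_append_right _ _)
end

end OTree

open OTree in
/-- Let `t` be a ranked Safra tree with `n` nodes `v₁, …, vₙ` listed in
depth-first post-order (identified below by their ranks `ranks t`, since the ranking is
a bijection).  Then `vₙ` is the root, for every `1 ≤ i < n` the parent of `vᵢ` is `vⱼ`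
with `j = min {k | i < k ≤ n ∧ rk v_k < rk vᵢ}`, and if `vᵢ` is the left sibling of
`vⱼ` then `i < j` (positions being recovered via `List.indexOf` into `ranks t`). -/
theorem postorder_parent_characterization (Q : Type u) (t : OTree Q)
    (h : IsRankedSafraTree t) :
    (ranks t).getD (size t - 1) 0 = rootRank t ∧
    (∀ i, 1 ≤ i → i < size t →
      ((ranks t).getD (i - 1) 0,
        (ranks t).getD
          (sInf {k | i < k ∧ k ≤ size t ∧
            (ranks t).getD (k - 1) 0 < (ranks t).getD (i - 1) 0} - 1) 0) ∈ edges t) ∧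
    (∀ a b, (a, b) ∈ sibEdges t → (ranks t).idxOf a < (ranks t).idxOf b) := by
  obtain ⟨-, -, hperm, hok⟩ := h
  have hnodup : (ranks t).Nodup := hperm.nodup_iff.2 (List.nodup_range' _)
  rw [size_eq_length_ranks]
  refine ⟨?_, fun i hi hin => ?_, fun a b hab => ?_⟩
  · obtain ⟨l, hl⟩ := exists_ranks_eq_append_rootRank t
    simp [hl]
  · obtain ⟨p, rfl⟩ : ∃ p, i = p + 1 := ⟨i - 1, by omega⟩
    obtain ⟨a, b, hnext, hedge⟩ := exists_nextSmaller_mem_edges hok hin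
    rw [Nat.add_sub_cancel, hnext.getD_eq, hnext.getD_sInf_sub_one]
    exact hedge
  · exact List.idxOf_lt_idxOf_of_pair_sublist hnodup (pair_sublist_ranks_of_mem_sibEdges hab)
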